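/- Let Γ₁ and Γ₂ be disjoint finite simple graphs and let T₁, T₂ be finite trees such that for i = 1, 2 there is a quasi-isometric group embedding G(Γ_i) → G(T_i). Let T be the tree obtained from the disjoint union T₁ ⊔ T₂ by adding one new vertex u together with edges joining u to a chosen vertex of T₁ and to a chosen vertex of T₂ (so a vertex of T₁ is joined to a vertex of T₂ by a path of length two). Then G(Γ₁ ⊔ Γ₂) ≅ G(Γ₁) × G(Γ₂), the natural homomorphism G(T₁) × G(T₂) → G(T) is an injective isometric embedding with respect to the word metrics (the product carrying the word metric of the generating set V(T₁) ∪ V(T₂)), and consequently there is a quasi-isometric group embedding G(Γ₁ ⊔ Γ₂) → G(T). -/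

import Mathlib

/-! Right-angled Artin groups in the "opposite" convention:
generators are vertices, and two generators commute iff the vertices are NOT adjacent. -/

/-- The commutation relators for the right-angled Artin group (opposite convention):
one commutator for each pair of distinct non-adjacent vertices. -/
def raagRels {V : Type*} (Γ : SimpleGraph V) : Set (FreeGroup V) :=
  {r | ∃ u v : V, u ≠ v ∧ ¬ Γ.Adj u v ∧
    r = FreeGroup.of u * FreeGroup.of v * (FreeGroup.of u)⁻¹ * (FreeGroup.of v)⁻¹}

/-- The right-angled Artin group `G(Γ)` (opposite convention). -/
abbrev Raag {V : Type*} (Γ : SimpleGraph V) : Type _ := PresentedGroup (raagRels Γ)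

/-- The vertex generators of `G(Γ)`. -/
abbrev Raag.of {V : Type*} (Γ : SimpleGraph V) (v : V) : Raag Γ := PresentedGroup.of v

/-- The element of `G(Γ)` represented by a word: a list of letters, where the letter `(v, b)`
stands for `v` if `b = true` and for `v⁻¹` if `b = false`. -/
def wordProd {V : Type*} (Γ : SimpleGraph V) (w : List (V × Bool)) : Raag Γ :=
  (w.map fun l => if l.2 then Raag.of Γ l.1 else (Raag.of Γ l.1)⁻¹).prod

/-- A word is reduced if no shorter word represents the same element of `G(Γ)`. -/
def IsReducedWord {V : Type*} (Γ : SimpleGraph V) (w : List (V × Bool)) : Prop :=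
  ∀ w' : List (V × Bool), wordProd Γ w' = wordProd Γ w → w.length ≤ w'.length

/-- The word length of `g` with respect to a generating set `S` of a group:
the least length of a list of elements of `S ∪ S⁻¹` whose product is `g`. -/
noncomputable def wordLength {G : Type*} [Group G] (S : Set G) (g : G) : ℕ :=
  sInf {n | ∃ l : List G, (∀ x ∈ l, x ∈ S ∨ x⁻¹ ∈ S) ∧ l.prod = g ∧ l.length = n}

/-- The (right-invariant) word metric associated to a generating set. -/
noncomputable def wordDist {G : Type*} [Group G] (S : Set G) (x y : G) : ℝ :=
  (wordLength S (y * x⁻¹) : ℝ)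

/-- Word length in `G(Γ)` with respect to the vertex generating set. -/
noncomputable def raagNorm {V : Type*} (Γ : SimpleGraph V) (g : Raag Γ) : ℕ :=
  wordLength (Set.range (Raag.of Γ)) g

/-- The word metric on `G(Γ)` with respect to the vertex generating set. -/
noncomputable def raagDist {V : Type*} (Γ : SimpleGraph V) (x y : Raag Γ) : ℝ :=
  wordDist (Set.range (Raag.of Γ)) x y

/-- A quasi-isometric group embedding: an injective group homomorphism which
is a quasi-isometric embedding with respect to the given metrics. -/
def IsQIEmbedding {G H : Type*} [Group G] [Group H] (f : G →* H)
    (dG : G → G → ℝ) (dH : H → H → ℝ) : Prop :=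
  Function.Injective f ∧ ∃ C : ℝ, 1 ≤ C ∧ ∀ x y : G,
    dG x y / C - C ≤ dH (f x) (f y) ∧ dH (f x) (f y) ≤ C * dG x y + C

/-- The support of `g ∈ G(Γ)`: vertices occurring in some reduced word representing `g`. -/
def raagSupp {V : Type*} (Γ : SimpleGraph V) (g : Raag Γ) : Set V :=
  {v | ∃ w : List (V × Bool), IsReducedWord Γ w ∧ wordProd Γ w = g ∧ ∃ b, (v, b) ∈ w}

/-- A cancellation of the vertex `v` in the word `w`: a subword `v^{±1} w' v^{∓1}` where the
support of the element represented by `w'` is disjoint from the link of `v`. -/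
def HasCancellationOf {V : Type*} (Γ : SimpleGraph V) (w : List (V × Bool)) (v : V) : Prop :=
  ∃ (w₁ w' w₂ : List (V × Bool)) (b : Bool),
    w = w₁ ++ (v, b) :: (w' ++ (v, !b) :: w₂) ∧
    ∀ u ∈ raagSupp Γ (wordProd Γ w'), ¬ Γ.Adj v u

/-- An innermost cancellation of the vertex `v` in the word `w`: a cancellation
`v^{±1} w' v^{∓1}` in which moreover no letter of `w'` involves `v`. -/
def HasInnermostCancellationOf {V : Type*} (Γ : SimpleGraph V) (w : List (V × Bool)) (v : V) :
    Prop :=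
  ∃ (w₁ w' w₂ : List (V × Bool)) (b : Bool),
    w = w₁ ++ (v, b) :: (w' ++ (v, !b) :: w₂) ∧
    (∀ u ∈ raagSupp Γ (wordProd Γ w'), ¬ Γ.Adj v u) ∧
    ∀ b' : Bool, (v, b') ∉ w'

/-- A covering of simple graphs: a graph homomorphism which is bijective on neighbor sets. -/
structure IsGraphCovering {V' V : Type*} (Γ' : SimpleGraph V') (Γ : SimpleGraph V)
    (p : V' → V) : Prop where
  adj : ∀ {x y : V'}, Γ'.Adj x y → Γ.Adj (p x) (p y)
  bijOn : ∀ x : V', Set.BijOn p (Γ'.neighborSet x) (Γ.neighborSet (p x))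

/-- A universal cover of a connected graph `Γ`: a covering whose total graph is a tree. -/
def IsUniversalCover {V' V : Type*} (Γ' : SimpleGraph V') (Γ : SimpleGraph V)
    (p : V' → V) : Prop :=
  IsGraphCovering Γ' Γ p ∧ Γ'.IsTree

section Phi

variable {V' V : Type*} [LinearOrder V'] [DecidableEq V]

/-- The lifts in `T` of a vertex `v`, listed in increasing order. -/
def liftVerts (p : V' → V) (T : Finset V') (v : V) : List V' :=
  (T.filter fun t => p t = v).sort (· ≤ ·)

/-- The lifts in `T` of a vertex `v`, in increasing order, as vertices of the induced subgraph. -/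
def liftSubVerts (p : V' → V) (T : Finset V') (v : V) : List (↥(T : Set V')) :=
  (liftVerts p T v).pmap (fun t ht => (⟨t, ht⟩ : ↥(T : Set V')))
    (fun t ht => by
      have : t ∈ T := (Finset.mem_filter.mp ((Finset.mem_sort _).mp ht)).1
      exact Finset.mem_coe.mpr this)

/-- `φ(Γ,T)` sends each vertex `v` of `Γ` to the product, in increasing order,
of the lifts of `v` lying in `T`.  This predicate singles out the homomorphism `φ(Γ,T)`. -/
def IsPhi (Γ : SimpleGraph V) (Γ' : SimpleGraph V') (p : V' → V) (T : Finset V')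
    (φ : Raag Γ →* Raag (Γ'.induce (T : Set V'))) : Prop :=
  ∀ v : V, φ (Raag.of Γ v) =
    ((liftSubVerts p T v).map (Raag.of (Γ'.induce (T : Set V')))).prod

/-- The `φ(Γ,T)`-homomorphic word of a word `w`: each letter `x^{e}` of `w` is replaced by the
word `(t₁ t₂ ⋯ t_k)^{e}` where `t₁ < t₂ < ⋯ < t_k` are the lifts of `x` lying in `T`. -/
def homWord (p : V' → V) (T : Finset V') (w : List (V × Bool)) :
    List (↥(T : Set V') × Bool) :=
  w.flatMap fun l =>
    if l.2 then (liftSubVerts p T l.1).map (fun t => (t, true))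
    else ((liftSubVerts p T l.1).reverse).map (fun t => (t, false))

/-- `φ(Γ,T)` is `F`-surviving: for every reduced word `w` in `G(Γ)` and every `v ∈ F`, the
`φ(Γ,T)`-homomorphic word of `w` has no cancellation of `v`. -/
def IsSurviving (Γ : SimpleGraph V) (Γ' : SimpleGraph V') (p : V' → V) (T : Finset V')
    (F : Set V') : Prop :=
  ∀ w : List (V × Bool), IsReducedWord Γ w →
    ∀ (v : V') (hv : v ∈ (T : Set V')), v ∈ F →
      ¬ HasCancellationOf (Γ'.induce (T : Set V')) (homWord p T w) ⟨v, hv⟩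

end Phi

/-- The tree obtained from the disjoint union `T₁ ⊔ T₂` by adding one new vertex `u` joined by
edges to the vertex `a` of `T₁` and to the vertex `b` of `T₂`. -/
def joinGraph {W₁ W₂ : Type*} (T₁ : SimpleGraph W₁) (T₂ : SimpleGraph W₂) (a : W₁) (b : W₂) :
    SimpleGraph ((W₁ ⊕ W₂) ⊕ Unit) where
  Adj x y :=
    match x, y with
    | .inl (.inl s), .inl (.inl t) => T₁.Adj s t
    | .inl (.inr s), .inl (.inr t) => T₂.Adj s t
    | .inl (.inl s), .inr _ => s = a
    | .inr _, .inl (.inl t) => t = a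
    | .inl (.inr s), .inr _ => s = b
    | .inr _, .inl (.inr t) => t = b
    | _, _ => False
  symm := by
    constructor
    rintro ((s | s) | u) ((t | t) | u') h
    · exact T₁.adj_symm h
    · exact h.elim
    · exact h
    · exact h.elim
    · exact T₂.adj_symm h
    · exact h
    · exact h
    · exact h
    · exact h.elim
  loopless := by
    constructor
    rintro ((s | s) | u) h
    · exact T₁.irrefl h
    · exact T₂.irrefl h
    · exact h.elim

/-! Non-adjacent vertices commute, so `G(Γ₁ ⊔ Γ₂) ≅ G(Γ₁) × G(Γ₂)`, and the word length of a pair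
for the generating set `V(Γ₁) ∪ V(Γ₂)` is the sum of the word lengths of its coordinates.

`T₁ ⊔ T₂` is an induced subgraph of `T`. For an induced subgraph `Γ ⊆ Δ` the natural map
`G(Γ) → G(Δ)` has a retraction killing the vertices outside `Γ`; both maps send generators to
generators or to `1`, so neither increases word length, and the inclusion is isometric.
Hence `G(T₁) × G(T₂) → G(T)` is an isometric embedding, and conjugating `f₁ × f₂` by the
isometries `G(Γ₁ ⊔ Γ₂) ≅ G(Γ₁) × G(Γ₂)` and `G(T₁) × G(T₂) → G(T)` gives a quasi-isometric
embedding with constant `C₁ + C₂`. Finally `T` is a tree because joining two disjoint trees by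
an edge gives a tree, and `T` arises by doing this twice. -/

section WordLength

variable {G H : Type*} [Group G] [Group H] {S : Set G} {T : Set H}

def IsWord (S : Set G) (l : List G) : Prop := ∀ x ∈ l, x ∈ S ∨ x⁻¹ ∈ S

lemma IsWord.append {l₁ l₂ : List G} (h₁ : IsWord S l₁) (h₂ : IsWord S l₂) :
    IsWord S (l₁ ++ l₂) := by
  simp only [IsWord, List.mem_append] at *
  grind

lemma wordLength_le_length {l : List G} (hl : IsWord S l) : wordLength S l.prod ≤ l.length :=
  Nat.sInf_le ⟨l, hl, rfl, rfl⟩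

lemma exists_isWord_length_eq_wordLength {g : G} (hg : g ∈ Subgroup.closure S) :
    ∃ l, IsWord S l ∧ l.prod = g ∧ l.length = wordLength S g := by
  rw [← Subgroup.mem_toSubmonoid, Subgroup.closure_toSubmonoid] at hg
  obtain ⟨l, hl, hprod⟩ := Submonoid.exists_list_of_mem_closure hg
  have hne : {n | ∃ l : List G, IsWord S l ∧ l.prod = g ∧ l.length = n}.Nonempty :=
    ⟨l.length, l, hl, hprod, rfl⟩
  exact Nat.sInf_mem hne

lemma wordLength_mul_le {x y : G} (hx : x ∈ Subgroup.closure S) (hy : y ∈ Subgroup.closure S) :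
    wordLength S (x * y) ≤ wordLength S x + wordLength S y := by
  obtain ⟨lx, hlx, rfl, hx⟩ := exists_isWord_length_eq_wordLength hx
  obtain ⟨ly, hly, rfl, hy⟩ := exists_isWord_length_eq_wordLength hy
  simpa [hx, hy] using wordLength_le_length (hlx.append hly)

lemma wordLength_map_prod_le_countP [DecidableEq H] (φ : G →* H)
    (hφ : Set.MapsTo φ S (insert 1 T)) {l : List G} (hl : IsWord S l) :
    wordLength T (φ l.prod) ≤ l.countP fun x => φ x ≠ 1 := by
  have hword : IsWord T ((l.map φ).filter (· != 1)) := by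
    intro y hy
    obtain ⟨⟨x, hx, rfl⟩, hne⟩ : (∃ x ∈ l, φ x = y) ∧ y ≠ 1 := by simpa using hy
    rcases hl x hx with hxS | hxS
    · exact .inl ((hφ hxS).resolve_left hne)
    · exact .inr (by simpa [hne] using hφ hxS)
  have hprod : ((l.map φ).filter (· != 1)).prod = φ l.prod :=
    (List.prod_filter_bne_one _).trans (map_list_prod φ l).symm
  calc wordLength T (φ l.prod) = wordLength T ((l.map φ).filter (· != 1)).prod := by rw [hprod]
    _ ≤ ((l.map φ).filter (· != 1)).length := wordLength_le_length hword
    _ = l.countP fun x => φ x ≠ 1 := by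
      simp only [← List.countP_eq_length_filter, List.countP_map, Function.comp_def]
      congr! 2 with x; by_cases h : φ x = 1 <;> simp [h]

lemma wordLength_map_le (φ : G →* H) (hφ : Set.MapsTo φ S (insert 1 T)) {g : G}
    (hg : g ∈ Subgroup.closure S) : wordLength T (φ g) ≤ wordLength S g := by
  classical
  obtain ⟨l, hl, rfl, hlen⟩ := exists_isWord_length_eq_wordLength hg
  exact (wordLength_map_prod_le_countP φ hφ hl).trans (hlen ▸ List.countP_le_length)

lemma wordLength_map_eq_of_leftInverse (φ : G →* H) (ψ : H →* G)
    (hψφ : Function.LeftInverse ψ φ) (hφ : Set.MapsTo φ S (insert 1 T))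
    (hψ : Set.MapsTo ψ T (insert 1 S)) (hS : Subgroup.closure S = ⊤)
    (hT : Subgroup.closure T = ⊤) (g : G) : wordLength T (φ g) = wordLength S g := by
  refine (wordLength_map_le φ hφ (by simp [hS])).antisymm ?_
  simpa only [hψφ g] using wordLength_map_le ψ hψ (by simp [hT] : φ g ∈ Subgroup.closure T)

lemma wordDist_map_eq (φ : G →* H) (hφ : ∀ g, wordLength T (φ g) = wordLength S g) (x y : G) :
    wordDist T (φ x) (φ y) = wordDist S x y := by
  rw [wordDist, wordDist, ← map_inv, ← map_mul, hφ]

end WordLength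

section ProdWordLength

variable {G H : Type*} [Group G] [Group H] {S₁ : Set G} {S₂ : Set H}

lemma closure_prod_union_eq_top (h₁ : Subgroup.closure S₁ = ⊤) (h₂ : Subgroup.closure S₂ = ⊤) :
    Subgroup.closure (S₁ ×ˢ {1} ∪ {1} ×ˢ S₂) = ⊤ := by
  rw [eq_top_iff, ← Subgroup.top_prod_top, ← h₁, ← h₂, Subgroup.prod_le_iff,
    MonoidHom.map_closure, MonoidHom.map_closure]
  exact ⟨Subgroup.closure_mono (by rintro _ ⟨s, hs, rfl⟩; exact .inl ⟨hs, rfl⟩),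
    Subgroup.closure_mono (by rintro _ ⟨t, ht, rfl⟩; exact .inr ⟨rfl, ht⟩)⟩

lemma wordLength_prod (h₁ : Subgroup.closure S₁ = ⊤) (h₂ : Subgroup.closure S₂ = ⊤)
    (g : G) (h : H) :
    wordLength (S₁ ×ˢ {1} ∪ {1} ×ˢ S₂) (g, h) = wordLength S₁ g + wordLength S₂ h := by
  classical
  have hS := closure_prod_union_eq_top h₁ h₂
  apply le_antisymm
  · calc wordLength (S₁ ×ˢ {1} ∪ {1} ×ˢ S₂) (g, h)
        = wordLength (S₁ ×ˢ {1} ∪ {1} ×ˢ S₂) (MonoidHom.inl G H g * MonoidHom.inr G H h) := by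
          rw [MonoidHom.inl_apply, MonoidHom.inr_apply, Prod.mk_mul_mk, mul_one, one_mul]
      _ ≤ _ := wordLength_mul_le (by simp [hS]) (by simp [hS])
      _ ≤ wordLength S₁ g + wordLength S₂ h := by
          gcongr
          · exact wordLength_map_le _ (fun s hs => .inr (.inl ⟨hs, rfl⟩)) (by simp [h₁])
          · exact wordLength_map_le _ (fun t ht => .inr (.inr ⟨rfl, ht⟩)) (by simp [h₂])
  · obtain ⟨l, hl, hprod, hlen⟩ :=
      exists_isWord_length_eq_wordLength (S := S₁ ×ˢ {1} ∪ {1} ×ˢ S₂) (g := (g, h))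
        (by simp [hS])
    have hfst := wordLength_map_prod_le_countP (S := S₁ ×ˢ {1} ∪ {1} ×ˢ S₂) (MonoidHom.fst G H)
      (by rintro x (⟨hx, -⟩ | ⟨hx, -⟩); exacts [.inr hx, .inl hx]) hl
    have hsnd := wordLength_map_prod_le_countP (S := S₁ ×ˢ {1} ∪ {1} ×ˢ S₂) (MonoidHom.snd G H)
      (by rintro x (⟨-, hx⟩ | ⟨-, hx⟩); exacts [.inl hx, .inr hx]) hl
    simp only [hprod, MonoidHom.coe_fst, MonoidHom.coe_snd] at hfst hsnd
    calc wordLength S₁ g + wordLength S₂ h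
        ≤ l.countP (fun x => x.1 ≠ 1) + l.countP (fun x => x.2 ≠ 1) := add_le_add hfst hsnd
      _ ≤ l.countP (fun x => x.1 ≠ 1) + l.countP (fun x => ¬ x.1 ≠ 1) := by
          -- every letter of `l` has a trivial coordinate
          refine add_le_add_right (List.countP_mono_left fun x hx hx₂ => ?_) _
          rcases hl x hx with (⟨-, hx₂'⟩ | ⟨hx₁, -⟩) | (⟨-, hx₂'⟩ | ⟨hx₁, -⟩)
          all_goals simp_all
      _ = wordLength (S₁ ×ˢ {1} ∪ {1} ×ˢ S₂) (g, h) := by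
          rw [← hlen, List.length_eq_countP_add_countP (fun x : G × H => x.1 ≠ 1)]
          simp only [decide_eq_true_eq]

lemma wordDist_prod (h₁ : Subgroup.closure S₁ = ⊤) (h₂ : Subgroup.closure S₂ = ⊤) (x y : G × H) :
    wordDist (S₁ ×ˢ {1} ∪ {1} ×ˢ S₂) x y = wordDist S₁ x.1 y.1 + wordDist S₂ x.2 y.2 := by
  rw [wordDist, wordDist, wordDist, ← Prod.mk.eta (p := y * x⁻¹), wordLength_prod h₁ h₂]
  push_cast
  rfl

end ProdWordLength

section QIEmbedding

variable {G H G' H' : Type*} [Group G] [Group H] [Group G'] [Group H']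

lemma IsQIEmbedding.prodMap {f : G →* H} {f' : G' →* H'} {dG : G → G → ℝ} {dH : H → H → ℝ}
    {dG' : G' → G' → ℝ} {dH' : H' → H' → ℝ} (hf : IsQIEmbedding f dG dH)
    (hf' : IsQIEmbedding f' dG' dH') (hdG : ∀ x y, 0 ≤ dG x y) (hdG' : ∀ x y, 0 ≤ dG' x y) :
    IsQIEmbedding (f.prodMap f') (fun x y => dG x.1 y.1 + dG' x.2 y.2)
      (fun x y => dH x.1 y.1 + dH' x.2 y.2) := by
  obtain ⟨hinj, C, hC, hb⟩ := hf
  obtain ⟨hinj', C', hC', hb'⟩ := hf'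
  refine ⟨hinj.prodMap hinj', C + C', by linarith, fun x y => ?_⟩
  obtain ⟨hlo, hhi⟩ := hb x.1 y.1
  obtain ⟨hlo', hhi'⟩ := hb' x.2 y.2
  have hd := hdG x.1 y.1
  have hd' := hdG' x.2 y.2
  simp only [MonoidHom.coe_prodMap, Prod.map_fst, Prod.map_snd]
  constructor
  · have : dG x.1 y.1 / (C + C') ≤ dG x.1 y.1 / C := by gcongr; linarith
    have : dG' x.2 y.2 / (C + C') ≤ dG' x.2 y.2 / C' := by gcongr; linarith
    rw [add_div]
    linarith
  · nlinarith

lemma IsQIEmbedding.comp_isometries {f : G →* H} {dG : G → G → ℝ} {dH : H → H → ℝ}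
    (hf : IsQIEmbedding f dG dH) {e : G' →* G} {dG' : G' → G' → ℝ}
    (he : Function.Injective e) (hed : ∀ x y, dG (e x) (e y) = dG' x y)
    {j : H →* H'} {dH' : H' → H' → ℝ} (hj : Function.Injective j)
    (hjd : ∀ x y, dH' (j x) (j y) = dH x y) :
    IsQIEmbedding ((j.comp f).comp e) dG' dH' := by
  obtain ⟨hinj, C, hC, hb⟩ := hf
  refine ⟨hj.comp (hinj.comp he), C, hC, fun x y => ?_⟩
  simpa only [MonoidHom.comp_apply, hed, hjd] using hb (e x) (e y)

end QIEmbedding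

namespace SimpleGraph

variable {V W : Type*} {G : SimpleGraph V} {H : SimpleGraph W}

lemma reachable_sum_inl_iff {x y : V} :
    (G ⊕g H).Reachable (.inl x) (.inl y) ↔ G.Reachable x y := by
  simp only [reachable_iff_reflTransGen]
  refine ⟨fun h => h.lift' (Sum.elim id fun _ => x) ?_,
    fun h => h.lift Sum.inl fun _ _ => sum_adj_inl.mpr⟩
  rintro (a | a) (b | b) hab
  exacts [.single (sum_adj_inl.mp hab), by simp at hab, by simp at hab, .refl]

lemma reachable_sum_inr_iff {x y : W} :
    (G ⊕g H).Reachable (.inr x) (.inr y) ↔ H.Reachable x y :=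
  Iso.sumComm.reachable_iff.symm.trans reachable_sum_inl_iff

lemma isBridge_sum_inl_iff {x y : V} :
    (G ⊕g H).IsBridge s(.inl x, .inl y) ↔ G.IsBridge s(x, y) := by
  have : (G ⊕g H).deleteEdges {s(.inl x, .inl y)} = G.deleteEdges {s(x, y)} ⊕g H := by
    ext (a | a) (b | b) <;> simp
  rw [isBridge_iff, isBridge_iff, this, reachable_sum_inl_iff]

lemma isBridge_sum_inr_iff {x y : W} :
    (G ⊕g H).IsBridge s(.inr x, .inr y) ↔ H.IsBridge s(x, y) := by
  have : (G ⊕g H).deleteEdges {s(.inr x, .inr y)} = G ⊕g H.deleteEdges {s(x, y)} := by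
    ext (a | a) (b | b) <;> simp
  rw [isBridge_iff, isBridge_iff, this, reachable_sum_inr_iff]

lemma IsAcyclic.sum (hG : G.IsAcyclic) (hH : H.IsAcyclic) : (G ⊕g H).IsAcyclic := by
  rw [isAcyclic_iff_forall_adj_isBridge] at *
  rintro (x | x) (y | y) h
  · exact isBridge_sum_inl_iff.mpr (hG (sum_adj_inl.mp h))
  · simp at h
  · simp at h
  · exact isBridge_sum_inr_iff.mpr (hH (sum_adj_inr.mp h))

lemma IsTree.sum_sup_edge (hG : G.IsTree) (hH : H.IsTree) (v : V) (w : W) :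
    ((G ⊕g H) ⊔ edge (.inl v) (.inr w)).IsTree :=
  ⟨hG.connected.sum_sup_edge hH.connected,
    (hG.isAcyclic.sum hH.isAcyclic).sup_edge_of_not_reachable (not_reachable_sum_inl_inr v w)⟩

end SimpleGraph

section JoinGraph

open SimpleGraph

variable {W₁ W₂ : Type*} (T₁ : SimpleGraph W₁) (T₂ : SimpleGraph W₂) (a : W₁) (b : W₂)

def joinGraphIso : joinGraph T₁ T₂ a b ≃g
    (T₁ ⊕g ((T₂ ⊕g (⊥ : SimpleGraph Unit)) ⊔ edge (.inl b) (.inr ()))) ⊔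
      edge (.inl a) (.inr (.inr ())) where
  toEquiv := Equiv.sumAssoc W₁ W₂ Unit
  map_rel_iff' {x y} := by
    rcases x with (s | t) | u <;> rcases y with (s' | t') | u' <;> simp [joinGraph, edge_adj]

lemma joinGraph_isTree (hT₁ : T₁.IsTree) (hT₂ : T₂.IsTree) : (joinGraph T₁ T₂ a b).IsTree :=
  (joinGraphIso T₁ T₂ a b).isTree_iff.mpr <|
    hT₁.sum_sup_edge (hT₂.sum_sup_edge .of_subsingleton b ()) a (.inr ())

def joinGraphEmbedding : T₁ ⊕g T₂ ↪g joinGraph T₁ T₂ a b where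
  toFun := Sum.inl
  inj' := Sum.inl_injective
  map_rel_iff' {x y} := by rcases x with s | t <;> rcases y with s' | t' <;> simp [joinGraph]

end JoinGraph

lemma Subgroup.commute_of_mem_closure {G : Type*} [Group G] {s t : Set G}
    (h : ∀ x ∈ s, ∀ y ∈ t, Commute x y) {x y : G} (hx : x ∈ Subgroup.closure s)
    (hy : y ∈ Subgroup.closure t) : Commute x y := by
  have hle : Subgroup.closure s ≤ Subgroup.centralizer (Subgroup.closure t) := by
    rw [Subgroup.centralizer_closure, Subgroup.closure_le]
    exact fun x hx y hy => (h x hx y hy).eq.symm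
  exact (Subgroup.mem_centralizer_iff.mp (hle hx) y hy).symm

namespace Raag

variable {V W : Type*} {Γ : SimpleGraph V} {Δ : SimpleGraph W} {G : Type*} [Group G]

lemma closure_range_of (Γ : SimpleGraph V) : Subgroup.closure (Set.range (of Γ)) = ⊤ :=
  PresentedGroup.closure_range_of _

lemma raagDist_nonneg (Γ : SimpleGraph V) (x y : Raag Γ) : 0 ≤ raagDist Γ x y :=
  Nat.cast_nonneg _

lemma commute_of_not_adj {u v : V} (h : ¬Γ.Adj u v) : Commute (of Γ u) (of Γ v) := by
  obtain rfl | huv := eq_or_ne u v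
  · exact Commute.refl _
  rw [← commutatorElement_eq_one_iff_commute, commutatorElement_def]
  exact PresentedGroup.one_of_mem ⟨u, v, huv, h, rfl⟩

def lift (f : V → G) (hf : ∀ u v, ¬Γ.Adj u v → Commute (f u) (f v)) : Raag Γ →* G :=
  PresentedGroup.toGroup (f := f) <| by
    rintro _ ⟨u, v, -, huv, rfl⟩
    simpa [← commutatorElement_def, commutatorElement_eq_one_iff_commute] using hf u v huv

@[simp] lemma lift_of (f : V → G) (hf : ∀ u v, ¬Γ.Adj u v → Commute (f u) (f v)) (v : V) :
    lift f hf (of Γ v) = f v :=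
  PresentedGroup.toGroup.of _

lemma apply_mem_closure_range_comp_of (φ : Raag Γ →* G) (x : Raag Γ) :
    φ x ∈ Subgroup.closure (Set.range (φ ∘ of Γ)) := by
  rw [Set.range_comp, ← MonoidHom.map_closure, closure_range_of]
  exact Subgroup.mem_map_of_mem _ trivial

lemma commute_of_commute_of {φ : Raag Γ →* G} {ψ : Raag Δ →* G}
    (h : ∀ v w, Commute (φ (of Γ v)) (ψ (of Δ w))) (x : Raag Γ) (y : Raag Δ) :
    Commute (φ x) (ψ y) := by
  refine Subgroup.commute_of_mem_closure ?_ (apply_mem_closure_range_comp_of φ x)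
    (apply_mem_closure_range_comp_of ψ y)
  rintro _ ⟨v, rfl⟩ _ ⟨w, rfl⟩
  exact h v w

section Embedding

variable (ι : Γ ↪g Δ)

def map : Raag Γ →* Raag Δ :=
  lift (fun v => of Δ (ι v)) fun _ _ h => commute_of_not_adj (ι.map_adj_iff.not.mpr h)

@[simp] lemma map_of (v : V) : map ι (of Γ v) = of Δ (ι v) :=
  lift_of _ _ v

noncomputable def retract : Raag Δ →* Raag Γ :=
  lift (Function.extend ι (of Γ) 1) <| by
    intro w w' h
    by_cases hw : ∃ v, ι v = w
    · by_cases hw' : ∃ v', ι v' = w'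
      · obtain ⟨v, rfl⟩ := hw
        obtain ⟨v', rfl⟩ := hw'
        simp only [ι.injective.extend_apply]
        exact commute_of_not_adj (ι.map_adj_iff.not.mp h)
      · rw [Function.extend_apply' _ _ _ hw']
        exact Commute.one_right _
    · rw [Function.extend_apply' _ _ _ hw]
      exact Commute.one_left _

@[simp] lemma retract_of_apply (v : V) : retract ι (of Δ (ι v)) = of Γ v := by
  simp [retract, ι.injective.extend_apply]

lemma retract_of_of_notMem_range {w : W} (hw : w ∉ Set.range ι) : retract ι (of Δ w) = 1 := by
  simp [retract, Function.extend_apply' _ _ _ hw]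

@[simp] lemma retract_map (g : Raag Γ) : retract ι (map ι g) = g :=
  DFunLike.congr_fun (f := (retract ι).comp (map ι)) (g := MonoidHom.id _)
    (PresentedGroup.ext fun v => by simp) g

lemma retract_map_eq_one {V' : Type*} {Γ' : SimpleGraph V'} (κ : Γ' ↪g Δ)
    (h : ∀ v v', κ v' ≠ ι v) (g : Raag Γ') : retract ι (map κ g) = 1 :=
  DFunLike.congr_fun (f := (retract ι).comp (map κ)) (g := 1)
    (PresentedGroup.ext fun v' => by
      simp [retract_of_of_notMem_range ι (w := κ v') (by rintro ⟨v, hv⟩; exact h v v' hv.symm)])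
    g

lemma map_injective : Function.Injective (map ι) :=
  Function.LeftInverse.injective (retract_map ι)

lemma raagNorm_map (g : Raag Γ) : raagNorm Δ (map ι g) = raagNorm Γ g := by
  refine wordLength_map_eq_of_leftInverse _ _ (retract_map ι) ?_ ?_
    (closure_range_of Γ) (closure_range_of Δ) g
  · rintro _ ⟨v, rfl⟩
    exact .inr ⟨ι v, (map_of ι v).symm⟩
  · rintro _ ⟨w, rfl⟩
    by_cases hw : w ∈ Set.range ι
    · obtain ⟨v, rfl⟩ := hw
      exact .inr ⟨v, (retract_of_apply ι v).symm⟩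
    · exact .inl (retract_of_of_notMem_range ι hw)

end Embedding

section Sum

variable {V₁ V₂ : Type*} (Γ₁ : SimpleGraph V₁) (Γ₂ : SimpleGraph V₂)

open SimpleGraph.Embedding

@[simp] lemma retract_sumInl_of (v : V₁ ⊕ V₂) :
    retract (sumInl (H := Γ₂)) (of (Γ₁ ⊕g Γ₂) v) = v.elim (of Γ₁) fun _ => 1 := by
  rcases v with v | v
  · exact retract_of_apply sumInl v
  · exact retract_of_of_notMem_range sumInl (by simp)

@[simp] lemma retract_sumInr_of (v : V₁ ⊕ V₂) :
    retract (sumInr (G := Γ₁)) (of (Γ₁ ⊕g Γ₂) v) = v.elim (fun _ => 1) (of Γ₂) := by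
  rcases v with v | v
  · exact retract_of_of_notMem_range sumInr (by simp)
  · exact retract_of_apply sumInr v

noncomputable def sumEquivProd : Raag (Γ₁ ⊕g Γ₂) ≃* Raag Γ₁ × Raag Γ₂ :=
  MonoidHom.toMulEquiv ((retract sumInl).prod (retract sumInr))
    (MonoidHom.noncommCoprod (map sumInl) (map sumInr) <|
      commute_of_commute_of fun v w => by simpa using commute_of_not_adj (by simp))
    (PresentedGroup.ext <| by rintro (v | v) <;> simp)
    (by
      ext ⟨x, y⟩
      · simp [retract_map_eq_one sumInl sumInr fun _ _ => Sum.inr_ne_inl]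
      · simp [retract_map_eq_one sumInr sumInl fun _ _ => Sum.inl_ne_inr])

@[simp] lemma sumEquivProd_of_inl (v : V₁) :
    sumEquivProd Γ₁ Γ₂ (of (Γ₁ ⊕g Γ₂) (.inl v)) = (of Γ₁ v, 1) := by
  simp [sumEquivProd]

@[simp] lemma sumEquivProd_of_inr (v : V₂) :
    sumEquivProd Γ₁ Γ₂ (of (Γ₁ ⊕g Γ₂) (.inr v)) = (1, of Γ₂ v) := by
  simp [sumEquivProd]

@[simp] lemma sumEquivProd_symm_of_one (v : V₁) :
    (sumEquivProd Γ₁ Γ₂).symm (of Γ₁ v, 1) = of (Γ₁ ⊕g Γ₂) (.inl v) := by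
  rw [MulEquiv.symm_apply_eq, sumEquivProd_of_inl]

@[simp] lemma sumEquivProd_symm_one_of (v : V₂) :
    (sumEquivProd Γ₁ Γ₂).symm (1, of Γ₂ v) = of (Γ₁ ⊕g Γ₂) (.inr v) := by
  rw [MulEquiv.symm_apply_eq, sumEquivProd_of_inr]

lemma wordLength_sumEquivProd (g : Raag (Γ₁ ⊕g Γ₂)) :
    wordLength (Set.range (of Γ₁) ×ˢ {1} ∪ {1} ×ˢ Set.range (of Γ₂)) (sumEquivProd Γ₁ Γ₂ g) =
      raagNorm (Γ₁ ⊕g Γ₂) g := by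
  refine wordLength_map_eq_of_leftInverse (sumEquivProd Γ₁ Γ₂).toMonoidHom
    (sumEquivProd Γ₁ Γ₂).symm.toMonoidHom (sumEquivProd Γ₁ Γ₂).symm_apply_apply ?_ ?_
    (closure_range_of _) (closure_prod_union_eq_top (closure_range_of _) (closure_range_of _)) g
  · rintro _ ⟨v | v, rfl⟩
    · exact .inr (.inl ⟨⟨v, by simp⟩, by simp⟩)
    · exact .inr (.inr ⟨by simp, ⟨v, by simp⟩⟩)
  · rintro ⟨x, y⟩ (⟨⟨v, rfl⟩, rfl⟩ | ⟨rfl, ⟨v, rfl⟩⟩)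
    · exact .inr ⟨.inl v, by simp⟩
    · exact .inr ⟨.inr v, by simp⟩

lemma raagDist_sumEquivProd (x y : Raag (Γ₁ ⊕g Γ₂)) :
    raagDist Γ₁ (sumEquivProd Γ₁ Γ₂ x).1 (sumEquivProd Γ₁ Γ₂ y).1 +
        raagDist Γ₂ (sumEquivProd Γ₁ Γ₂ x).2 (sumEquivProd Γ₁ Γ₂ y).2 =
      raagDist (Γ₁ ⊕g Γ₂) x y := by
  rw [raagDist, raagDist, ← wordDist_prod (closure_range_of _) (closure_range_of _)]
  exact wordDist_map_eq (sumEquivProd Γ₁ Γ₂).toMonoidHom (wordLength_sumEquivProd Γ₁ Γ₂) x y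

end Sum

section Join

variable {W₁ W₂ : Type*} (T₁ : SimpleGraph W₁) (T₂ : SimpleGraph W₂) (a : W₁) (b : W₂)

noncomputable def joinHom : Raag T₁ × Raag T₂ →* Raag (joinGraph T₁ T₂ a b) :=
  (map (joinGraphEmbedding T₁ T₂ a b)).comp (sumEquivProd T₁ T₂).symm.toMonoidHom

@[simp] lemma joinHom_of_one (s : W₁) :
    joinHom T₁ T₂ a b (of T₁ s, 1) = of (joinGraph T₁ T₂ a b) (.inl (.inl s)) := by
  simp [joinHom, joinGraphEmbedding]

@[simp] lemma joinHom_one_of (t : W₂) :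
    joinHom T₁ T₂ a b (1, of T₂ t) = of (joinGraph T₁ T₂ a b) (.inl (.inr t)) := by
  simp [joinHom, joinGraphEmbedding]

lemma joinHom_injective : Function.Injective (joinHom T₁ T₂ a b) :=
  (map_injective _).comp (sumEquivProd T₁ T₂).symm.injective

lemma raagDist_joinHom (x y : Raag T₁ × Raag T₂) :
    raagDist (joinGraph T₁ T₂ a b) (joinHom T₁ T₂ a b x) (joinHom T₁ T₂ a b y) =
      wordDist (Set.range (of T₁) ×ˢ {1} ∪ {1} ×ˢ Set.range (of T₂)) x y := by
  refine wordDist_map_eq _ (fun z => ?_) x y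
  conv_rhs => rw [← MulEquiv.apply_symm_apply (sumEquivProd T₁ T₂) z]
  exact (raagNorm_map _ _).trans (wordLength_sumEquivProd T₁ T₂ _).symm

end Join

end Raag

theorem qie_of_disjoint_union_general {V₁ V₂ W₁ W₂ : Type}
    (Γ₁ : SimpleGraph V₁) (Γ₂ : SimpleGraph V₂)
    (T₁ : SimpleGraph W₁) (T₂ : SimpleGraph W₂)
    (hT₁ : T₁.IsTree) (hT₂ : T₂.IsTree) (a : W₁) (b : W₂)
    (f₁ : Raag Γ₁ →* Raag T₁) (hf₁ : IsQIEmbedding f₁ (raagDist Γ₁) (raagDist T₁))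
    (f₂ : Raag Γ₂ →* Raag T₂) (hf₂ : IsQIEmbedding f₂ (raagDist Γ₂) (raagDist T₂)) :
    -- G(Γ₁ ⊔ Γ₂) ≅ G(Γ₁) × G(Γ₂), compatibly with the vertex generators
    (∃ e : Raag (Γ₁ ⊕g Γ₂) ≃* Raag Γ₁ × Raag Γ₂,
      (∀ v : V₁, e (Raag.of (Γ₁ ⊕g Γ₂) (Sum.inl v)) = (Raag.of Γ₁ v, 1)) ∧
      (∀ v : V₂, e (Raag.of (Γ₁ ⊕g Γ₂) (Sum.inr v)) = (1, Raag.of Γ₂ v))) ∧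
    -- T is a tree
    (joinGraph T₁ T₂ a b).IsTree ∧
    -- the natural homomorphism G(T₁) × G(T₂) → G(T) is an injective isometric embedding
    (∃ j : Raag T₁ × Raag T₂ →* Raag (joinGraph T₁ T₂ a b),
      (∀ s : W₁, j (Raag.of T₁ s, 1) = Raag.of (joinGraph T₁ T₂ a b) (Sum.inl (Sum.inl s))) ∧
      (∀ t : W₂, j (1, Raag.of T₂ t) = Raag.of (joinGraph T₁ T₂ a b) (Sum.inl (Sum.inr t))) ∧
      Function.Injective j ∧
      (∀ x y : Raag T₁ × Raag T₂,
        wordDist ((Set.range fun s : W₁ => ((Raag.of T₁ s, 1) : Raag T₁ × Raag T₂)) ∪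
            (Set.range fun t : W₂ => ((1, Raag.of T₂ t) : Raag T₁ × Raag T₂))) x y =
          raagDist (joinGraph T₁ T₂ a b) (j x) (j y))) ∧
    -- consequently, G(Γ₁ ⊔ Γ₂) quasi-isometrically embeds into G(T)
    (∃ F : Raag (Γ₁ ⊕g Γ₂) →* Raag (joinGraph T₁ T₂ a b),
      IsQIEmbedding F (raagDist (Γ₁ ⊕g Γ₂)) (raagDist (joinGraph T₁ T₂ a b))) := by
  have hgens : ((Set.range fun s : W₁ => ((Raag.of T₁ s, 1) : Raag T₁ × Raag T₂)) ∪
      Set.range fun t : W₂ => ((1, Raag.of T₂ t) : Raag T₁ × Raag T₂)) =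
      Set.range (Raag.of T₁) ×ˢ {1} ∪ {1} ×ˢ Set.range (Raag.of T₂) := by
    rw [Set.prod_singleton, Set.singleton_prod, ← Set.range_comp, ← Set.range_comp]
    rfl
  refine ⟨⟨Raag.sumEquivProd Γ₁ Γ₂, Raag.sumEquivProd_of_inl Γ₁ Γ₂, Raag.sumEquivProd_of_inr Γ₁ Γ₂⟩,
    joinGraph_isTree T₁ T₂ a b hT₁ hT₂,
    ⟨Raag.joinHom T₁ T₂ a b, Raag.joinHom_of_one T₁ T₂ a b, Raag.joinHom_one_of T₁ T₂ a b,
      Raag.joinHom_injective T₁ T₂ a b, fun x y => by rw [hgens, Raag.raagDist_joinHom]⟩,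
    _, (hf₁.prodMap hf₂ (Raag.raagDist_nonneg Γ₁) (Raag.raagDist_nonneg Γ₂)).comp_isometries
      (Raag.sumEquivProd Γ₁ Γ₂).injective (Raag.raagDist_sumEquivProd Γ₁ Γ₂)
      (Raag.joinHom_injective T₁ T₂ a b) fun x y => ?_⟩
  rw [Raag.raagDist_joinHom, wordDist_prod (Raag.closure_range_of T₁) (Raag.closure_range_of T₂)]
  rfl

/-- Let `Γ₁, Γ₂` be disjoint finite simple graphs, `T₁, T₂` finite trees with
quasi-isometric group embeddings `G(Γᵢ) → G(Tᵢ)`, and let `T` be the tree obtained from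
`T₁ ⊔ T₂` by joining a new vertex `u` to a vertex `a` of `T₁` and a vertex `b` of `T₂`.
Then `G(Γ₁ ⊔ Γ₂) ≅ G(Γ₁) × G(Γ₂)`; `T` is a tree; the natural homomorphism
`G(T₁) × G(T₂) → G(T)` is an injective isometric embedding (the product carrying the word
metric of the generating set `V(T₁) ∪ V(T₂)`); and consequently there is a quasi-isometric
group embedding `G(Γ₁ ⊔ Γ₂) → G(T)`. -/
theorem qie_of_disjoint_union {V₁ V₂ W₁ W₂ : Type}
    [Fintype V₁] [Fintype V₂] [Fintype W₁] [Fintype W₂]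
    (Γ₁ : SimpleGraph V₁) (Γ₂ : SimpleGraph V₂)
    (T₁ : SimpleGraph W₁) (T₂ : SimpleGraph W₂)
    (hT₁ : T₁.IsTree) (hT₂ : T₂.IsTree) (a : W₁) (b : W₂)
    (f₁ : Raag Γ₁ →* Raag T₁) (hf₁ : IsQIEmbedding f₁ (raagDist Γ₁) (raagDist T₁))
    (f₂ : Raag Γ₂ →* Raag T₂) (hf₂ : IsQIEmbedding f₂ (raagDist Γ₂) (raagDist T₂)) :
    -- G(Γ₁ ⊔ Γ₂) ≅ G(Γ₁) × G(Γ₂), compatibly with the vertex generators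
    (∃ e : Raag (Γ₁ ⊕g Γ₂) ≃* Raag Γ₁ × Raag Γ₂,
      (∀ v : V₁, e (Raag.of (Γ₁ ⊕g Γ₂) (Sum.inl v)) = (Raag.of Γ₁ v, 1)) ∧
      (∀ v : V₂, e (Raag.of (Γ₁ ⊕g Γ₂) (Sum.inr v)) = (1, Raag.of Γ₂ v))) ∧
    -- T is a tree
    (joinGraph T₁ T₂ a b).IsTree ∧
    -- the natural homomorphism G(T₁) × G(T₂) → G(T) is an injective isometric embedding
    (∃ j : Raag T₁ × Raag T₂ →* Raag (joinGraph T₁ T₂ a b),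
      (∀ s : W₁, j (Raag.of T₁ s, 1) = Raag.of (joinGraph T₁ T₂ a b) (Sum.inl (Sum.inl s))) ∧
      (∀ t : W₂, j (1, Raag.of T₂ t) = Raag.of (joinGraph T₁ T₂ a b) (Sum.inl (Sum.inr t))) ∧
      Function.Injective j ∧
      (∀ x y : Raag T₁ × Raag T₂,
        wordDist ((Set.range fun s : W₁ => ((Raag.of T₁ s, 1) : Raag T₁ × Raag T₂)) ∪
            (Set.range fun t : W₂ => ((1, Raag.of T₂ t) : Raag T₁ × Raag T₂))) x y =
          raagDist (joinGraph T₁ T₂ a b) (j x) (j y))) ∧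
    -- consequently, G(Γ₁ ⊔ Γ₂) quasi-isometrically embeds into G(T)
    (∃ F : Raag (Γ₁ ⊕g Γ₂) →* Raag (joinGraph T₁ T₂ a b),
      IsQIEmbedding F (raagDist (Γ₁ ⊕g Γ₂)) (raagDist (joinGraph T₁ T₂ a b))) :=
  qie_of_disjoint_union_general Γ₁ Γ₂ T₁ T₂ hT₁ hT₂ a b f₁ hf₁ f₂ hf₂
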